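/- Let G be a connected graph with adjacency matrix eigenvalues μ₁ ≥ ... ≥ μₙ and let κ be the smallest integer with μ₁ + Σ_{i=1}^κ μ_{n+1−i} ≤ 0. Then 1 + κ ≥ 1 + μ₁/|μₙ|, i.e., the Hoffman-sum bound implies the Hoffman ratio bound. -/

import Mathlib

lemma div_abs_le_of_add_mul_nonpos {x a : ℝ} {k : ℕ} (hax : a ≤ x) (h : x + k * a ≤ 0) :
    x / |a| ≤ k := by
  rcases lt_trichotomy a 0 with ha | rfl | ha
  · rw [abs_of_neg ha, div_le_iff₀ (neg_pos.mpr ha)]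
    linarith
  · simp -- `x / 0 = 0`
  · nlinarith [(k.cast_nonneg : (0 : ℝ) ≤ k)]

/-- with `κ` the smallest positive integer such that
`μ₁ + ∑_{i=1}^κ μ_{n+1-i} ≤ 0`, one has `1 + κ ≥ 1 + μ₁ / |μₙ|`: the Hoffman-sum bound
implies the Hoffman ratio bound. -/
theorem stmt9 {n : ℕ} (hn : 0 < n) (μ : Fin n → ℝ) (hμanti : Antitone μ) (κ : ℕ)
    (hκ : μ ⟨0, hn⟩ + ∑ i ∈ Finset.range κ, μ ⟨n - 1 - i, by omega⟩ ≤ 0) :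
    1 + μ ⟨0, hn⟩ / |μ ⟨n - 1, by omega⟩| ≤ 1 + (κ : ℝ) := by
  have hsum : κ * μ ⟨n - 1, by omega⟩ ≤ ∑ i ∈ Finset.range κ, μ ⟨n - 1 - i, by omega⟩ := by
    simpa using Finset.card_nsmul_le_sum (Finset.range κ) _ _
      fun i _ ↦ hμanti (Fin.mk_le_mk.mpr (by omega))
  have hlast : μ ⟨n - 1, by omega⟩ ≤ μ ⟨0, hn⟩ := hμanti (Fin.mk_le_mk.mpr (by omega))
  gcongr
  exact div_abs_le_of_add_mul_nonpos hlast (by linarith)
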